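/- arXiv:2205.13418 — 3 statements merged into one kernel-verified Lean document; each statement's English description precedes it below -/
import Mathlib

section
/- Let H, ρ, S and V be d×d complex matrices with S Hermitian, and let U_L and V be d×d complex unitary matrices. Define, for real θ, the matrices U_R(θ) = exp(−(i θ/2) S) · V and U(θ) = U_L · U_R(θ), and the cost function C(θ) = Tr(H · U(θ) · ρ · U(θ)*). Then C is differentiable in θ, and its derivative at every θ equals (i/2) · Tr( [U_R(θ) ρ U_R(θ)*, S] · U_L* H U_L ), where [X, Y] = XY − YX denotes the matrix commutator. -/
open Matrix

/-! With `a = -(i/2) • S`, the hermiticity of `S` makes `a` skew-adjoint, so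
`star (exp (θ • a)) = exp (θ • -a)` and `U_R(θ) ρ U_R(θ)*` is the conjugation flow
`exp (θ • a) * W * exp (θ • -a)` with `W = V ρ V*`, whose derivative is the commutator with `a`.
By cyclicity of the trace the cost is the trace of this flow against the fixed matrix
`U_L* H U_L`, and the trace is linear. -/

open NormedSpace

theorem hasDerivAt_exp_smul_mul_mul_exp_neg_smul {𝔸 : Type*} [NormedRing 𝔸] [NormedAlgebra ℝ 𝔸]
    [CompleteSpace 𝔸] (a w : 𝔸) (t : ℝ) :
    HasDerivAt (fun s : ℝ => exp (s • a) * w * exp (s • -a))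
      (a * (exp (t • a) * w * exp (t • -a)) - exp (t • a) * w * exp (t • -a) * a) t :=
  (((hasDerivAt_exp_smul_const' a t).mul_const w).mul
    (hasDerivAt_exp_smul_const (-a) t)).congr_deriv (by noncomm_ring)

namespace Matrix

variable {n : Type*} [Fintype n] [DecidableEq n]

noncomputable def rotationGate (S : Matrix n n ℂ) (θ : ℝ) : Matrix n n ℂ :=
  exp ((-(Complex.I * θ) / 2) • S)

theorem hasDerivAt_trace_rotationGate_conj_mul {S : Matrix n n ℂ} (hS : S.IsHermitian)
    (W K : Matrix n n ℂ) (θ : ℝ) :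
    HasDerivAt (fun θ => trace (rotationGate S θ * W * star (rotationGate S θ) * K))
      (Complex.I / 2 * trace ((rotationGate S θ * W * star (rotationGate S θ) * S -
        S * (rotationGate S θ * W * star (rotationGate S θ))) * K)) θ := by
  set a : Matrix n n ℂ := (-Complex.I / 2) • S
  have hgate : ∀ s : ℝ, rotationGate S s = exp (s • a) := fun s => by
    rw [rotationGate, ← smul_assoc, Complex.real_smul]; ring_nf
  have ha : star a = -a := by
    rw [star_smul, hS.star_eq, ← neg_smul]; congr 1; simp [neg_div]
  have hstar : ∀ s : ℝ, star (exp (s • a)) = exp (s • -a) := fun s => by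
    rw [star_exp, star_smul, star_trivial, ha]
  simp only [hgate, hstar]
  set M := exp (θ • a) * W * exp (θ • -a)
  have hderiv : trace ((a * M - M * a) * K) = Complex.I / 2 * trace ((M * S - S * M) * K) := by
    simp only [a, smul_mul, Matrix.mul_smul, sub_mul, trace_sub, trace_smul, smul_eq_mul]
    ring
  -- Any norm on the finite-dimensional matrix space gives the same derivatives; this one is an
  -- algebra norm, as the derivative of `exp` requires.
  let := Matrix.linftyOpNormedRing (n := n) (α := ℂ)
  let := Matrix.linftyOpNormedAlgebra (R := ℝ) (n := n) (α := ℂ)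
  have hM := (hasDerivAt_exp_smul_mul_mul_exp_neg_smul a W θ).mul_const K
  exact ((traceLinearMap n ℝ ℂ).toContinuousLinearMap.hasFDerivAt.comp_hasDerivAt θ hM).congr_deriv
    hderiv

end Matrix

theorem cost_function_hasDerivAt_general
    (d : ℕ)
    (H ρ S V UL : Matrix (Fin d) (Fin d) ℂ)
    (hS : S.IsHermitian)
    (UR : ℝ → Matrix (Fin d) (Fin d) ℂ)
    (hUR : UR = fun θ : ℝ => NormedSpace.exp ((-(Complex.I * (θ : ℂ)) / 2) • S) * V)
    (U : ℝ → Matrix (Fin d) (Fin d) ℂ)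
    (hU : U = fun θ : ℝ => UL * UR θ)
    (C : ℝ → ℂ)
    (hC : C = fun θ : ℝ => Matrix.trace (H * U θ * ρ * star (U θ))) :
    ∀ θ : ℝ, HasDerivAt C
      ((Complex.I / 2) *
        Matrix.trace
          ((UR θ * ρ * star (UR θ) * S - S * (UR θ * ρ * star (UR θ))) *
            (star UL * H * UL))) θ := by
  have hconj : ∀ θ, UR θ * ρ * star (UR θ) =
      rotationGate S θ * (V * ρ * star V) * star (rotationGate S θ) := fun θ => by
    simp only [hUR, rotationGate, star_mul, Matrix.mul_assoc]
  have hcost : C = fun θ => trace (UR θ * ρ * star (UR θ) * (star UL * H * UL)) := by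
    funext θ
    rw [hC, hU, ← trace_mul_cycle', ← trace_mul_cycle]
    simp only [star_mul, Matrix.mul_assoc]
  intro θ
  rw [hcost]
  simpa only [hconj] using
    hasDerivAt_trace_rotationGate_conj_mul hS (V * ρ * star V) (star UL * H * UL) θ

/-- **Derivative of the variational cost function (Eq. (A38)).**
With `U_R(θ) = exp(−(iθ/2) S) V`, `U(θ) = U_L U_R(θ)` (`S` Hermitian, `U_L, V` unitary),
the cost `C(θ) = Tr(H U(θ) ρ U(θ)*)` is differentiable in `θ` with derivative
`(i/2) Tr([U_R(θ) ρ U_R(θ)*, S] · U_L* H U_L)`. -/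
theorem cost_function_hasDerivAt
    (d : ℕ)
    (H ρ S V UL : Matrix (Fin d) (Fin d) ℂ)
    (hS : S.IsHermitian)
    (hUL : UL ∈ Matrix.unitaryGroup (Fin d) ℂ)
    (hV : V ∈ Matrix.unitaryGroup (Fin d) ℂ)
    (UR : ℝ → Matrix (Fin d) (Fin d) ℂ)
    (hUR : UR = fun θ : ℝ => NormedSpace.exp ((-(Complex.I * (θ : ℂ)) / 2) • S) * V)
    (U : ℝ → Matrix (Fin d) (Fin d) ℂ)
    (hU : U = fun θ : ℝ => UL * UR θ)
    (C : ℝ → ℂ)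
    (hC : C = fun θ : ℝ => Matrix.trace (H * U θ * ρ * star (U θ))) :
    ∀ θ : ℝ, HasDerivAt C
      ((Complex.I / 2) *
        Matrix.trace
          ((UR θ * ρ * star (UR θ) * S - S * (UR θ * ρ * star (UR θ))) *
            (star UL * H * UL))) θ :=
  cost_function_hasDerivAt_general d H ρ S V UL hS UR hUR U hU C hC
end

section
/- Let d ≥ 1 and let μ be the Haar probability measure on the unitary group U(d) of d×d complex unitary matrices. For arbitrary d×d complex matrices ρ, S and K, the integral over W of Tr( [W ρ W*, S] · K ) with respect to μ equals 0, where [X, Y] = XY − YX denotes the matrix commutator. -/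
/-!
The twirl `M = ∫ W ρ W* dμ(W)` is invariant under conjugation by every unitary, by left
invariance of `μ`. Since the unitaries span the whole matrix algebra, `M` commutes with every
matrix, in particular with `S`. The integrand is a linear function of `W ρ W*`, so the integral
equals `Tr([M, S] K) = 0`.
-/

open MeasureTheory Matrix

section CStarAlgebra

variable {A : Type*} [CStarAlgebra A]

@[simps!]
noncomputable def Unitary.conjLinearIsometry (u : unitary A) : A →ₗᵢ[ℂ] A where
  toLinearMap := LinearMap.mulLeftRight ℂ ((u : A), star (u : A))
  norm_map' x := by simp [← Unitary.coe_star]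

theorem commute_of_mul_mul_star_eq {M : A} (u : unitary A)
    (h : (u : A) * M * star (u : A) = M) : Commute M u :=
  calc M * u = (u : A) * M * (star (u : A) * u) := by rw [← mul_assoc, h]
    _ = u * M := by rw [Unitary.coe_star_mul_self, mul_one]

theorem commute_of_forall_commute_unitary {M : A} (h : ∀ u : unitary A, Commute M u) (x : A) :
    Commute M x :=
  Submodule.span_induction (p := fun x _ => Commute M x) (fun u hu => h ⟨u, hu⟩)
    (Commute.zero_right M) (fun _ _ _ _ => Commute.add_right) (fun c _ _ hx => hx.smul_right c)
    (CStarAlgebra.span_unitary A ▸ Submodule.mem_top)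

variable [MeasurableSpace (unitary A)] [MeasurableMul (unitary A)]
  (μ : Measure (unitary A)) [μ.IsMulLeftInvariant]

theorem mul_integral_conj_mul_star (u : unitary A) (ρ : A) :
    (u : A) * (∫ w, (w : A) * ρ * star (w : A) ∂μ) * star (u : A) =
      ∫ w, (w : A) * ρ * star (w : A) ∂μ :=
  calc (u : A) * (∫ w, (w : A) * ρ * star (w : A) ∂μ) * star (u : A)
      = ∫ w, ((u * w : unitary A) : A) * ρ * star ((u * w : unitary A) : A) ∂μ := by
        rw [← Unitary.conjLinearIsometry_apply, ← LinearIsometry.integral_comp_comm]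
        simp [mul_assoc]
    _ = ∫ w, (w : A) * ρ * star (w : A) ∂μ :=
        integral_mul_left_eq_self (fun w : unitary A => (w : A) * ρ * star (w : A)) u

theorem commute_integral_conj (ρ x : A) :
    Commute (∫ w, (w : A) * ρ * star (w : A) ∂μ) x :=
  commute_of_forall_commute_unitary
    (fun u => commute_of_mul_mul_star_eq u (mul_integral_conj_mul_star μ u ρ)) x

end CStarAlgebra

namespace Matrix

-- The L2 operator norm makes square matrices a C⋆-algebra and induces the product topology.
open scoped Matrix.Norms.L2Operator

variable {n : Type*} [Fintype n] [DecidableEq n]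

noncomputable def traceCommutatorMulCLM (S K : Matrix n n ℂ) : Matrix n n ℂ →L[ℂ] ℂ :=
  LinearMap.toContinuousLinearMap
    (traceLinearMap n ℂ ℂ ∘ₗ LinearMap.mulRight ℂ K ∘ₗ
      (LinearMap.mulRight ℂ S - LinearMap.mulLeft ℂ S))

theorem traceCommutatorMulCLM_apply (S K X : Matrix n n ℂ) :
    traceCommutatorMulCLM S K X = trace ((X * S - S * X) * K) :=
  rfl

theorem integrable_unitary_conj [MeasurableSpace (unitaryGroup n ℂ)]
    [BorelSpace (unitaryGroup n ℂ)] (μ : Measure (unitaryGroup n ℂ)) [IsFiniteMeasure μ]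
    (ρ : Matrix n n ℂ) :
    Integrable (fun W : unitaryGroup n ℂ => (W : Matrix n n ℂ) * ρ * star (W : Matrix n n ℂ)) μ :=
  Integrable.of_bound (by fun_prop : Continuous _).aestronglyMeasurable ‖ρ‖
    (.of_forall fun W => by simp [← Unitary.coe_star])

end Matrix

theorem haar_average_commutator_right_block_general
    (d : ℕ)
    [MeasurableSpace (Matrix.unitaryGroup (Fin d) ℂ)]
    [BorelSpace (Matrix.unitaryGroup (Fin d) ℂ)]
    (μ : Measure (Matrix.unitaryGroup (Fin d) ℂ))
    [μ.IsHaarMeasure] [IsProbabilityMeasure μ]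
    (ρ S K : Matrix (Fin d) (Fin d) ℂ) :
    ∫ W : Matrix.unitaryGroup (Fin d) ℂ,
        Matrix.trace
          (((W : Matrix (Fin d) (Fin d) ℂ) * ρ * star (W : Matrix (Fin d) (Fin d) ℂ) * S
            - S * ((W : Matrix (Fin d) (Fin d) ℂ) * ρ *
                star (W : Matrix (Fin d) (Fin d) ℂ))) * K) ∂μ
      = 0 := by
  open scoped Matrix.Norms.L2Operator in
  have hM : Commute (∫ W, (W : Matrix (Fin d) (Fin d) ℂ) * ρ * star (W : Matrix _ _ ℂ) ∂μ) S :=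
    commute_integral_conj μ ρ S
  simp_rw [← traceCommutatorMulCLM_apply]
  rw [(traceCommutatorMulCLM S K).integral_comp_comm (integrable_unitary_conj μ ρ),
    traceCommutatorMulCLM_apply, hM.eq, sub_self, zero_mul, trace_zero]

/-- **Vanishing Haar average over the right block:** for the Haar probability measure `μ`
on `U(d)` (`d ≥ 1`) and arbitrary `d × d` complex matrices `ρ`, `S`, `K`,
`∫ Tr([W ρ W*, S] K) dμ(W) = 0`. -/
theorem haar_average_commutator_right_block
    (d : ℕ) (hd : 1 ≤ d)
    [MeasurableSpace (Matrix.unitaryGroup (Fin d) ℂ)]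
    [BorelSpace (Matrix.unitaryGroup (Fin d) ℂ)]
    (μ : Measure (Matrix.unitaryGroup (Fin d) ℂ))
    [μ.IsHaarMeasure] [IsProbabilityMeasure μ]
    (ρ S K : Matrix (Fin d) (Fin d) ℂ) :
    ∫ W : Matrix.unitaryGroup (Fin d) ℂ,
        Matrix.trace
          (((W : Matrix (Fin d) (Fin d) ℂ) * ρ * star (W : Matrix (Fin d) (Fin d) ℂ) * S
            - S * ((W : Matrix (Fin d) (Fin d) ℂ) * ρ *
                star (W : Matrix (Fin d) (Fin d) ℂ))) * K) ∂μ
      = 0 :=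
  haar_average_commutator_right_block_general d μ ρ S K
end

section
/- Let d ≥ 1 and let μ be the Haar probability measure on the unitary group U(d) of d×d complex unitary matrices. For arbitrary d×d complex matrices ρ, S and H, the double integral over (W_L, W_R) of (i/2) · Tr( [W_R ρ W_R*, S] · W_L* H W_L ) with respect to the product measure μ × μ equals 0. -/
/-! By Fubini it suffices to average over `W_R` first. For fixed `W_L` the integrand is a linear
functional of `W_R ρ W_R*`, so the inner integral is that functional applied to the twirl
`∫ W ρ W* dμ`. Left invariance of `μ` makes the twirl invariant under conjugation by every
unitary; since unitaries span all matrices, the twirl commutes with `S` and the commutator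
vanishes. -/

open MeasureTheory Matrix

-- Bochner integrals do not depend on the choice of norm; this one makes `Matrix n n ℂ` a
-- C⋆-algebra, which is where the spanning of matrices by unitaries is available.
open scoped Matrix.Norms.L2Operator

namespace Matrix

variable {n : Type*} [Fintype n] [DecidableEq n]

instance : CompactSpace (unitaryGroup n ℂ) :=
  isCompact_iff_compactSpace.mp <| Metric.isCompact_of_isClosed_isBounded isClosed_unitary <|
    (Metric.isBounded_iff_subset_closedBall 0).2
      ⟨‖(1 : Matrix n n ℂ)‖, fun _ hU => by
        simpa using (CStarRing.norm_mem_unitary_mul 1 hU).le⟩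

theorem commute_of_forall_commute_unitary {M : Matrix n n ℂ}
    (hM : ∀ U ∈ unitaryGroup n ℂ, Commute U M) (S : Matrix n n ℂ) : Commute S M := by
  have hker : (unitaryGroup n ℂ : Set (Matrix n n ℂ)) ⊆
      LinearMap.ker (LinearMap.mulRight ℂ M - LinearMap.mulLeft ℂ M) := fun U hU => by
    simpa [sub_eq_zero] using (hM U hU).eq
  have hS := (CStarAlgebra.span_unitary (Matrix n n ℂ) ▸ Submodule.span_le.2 hker)
    (Submodule.mem_top (x := S))
  simpa [sub_eq_zero, commute_iff_eq] using hS

section Twirl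

variable [MeasurableSpace (unitaryGroup n ℂ)] [BorelSpace (unitaryGroup n ℂ)]
  (μ : Measure (unitaryGroup n ℂ))

noncomputable def twirl (ρ : Matrix n n ℂ) : Matrix n n ℂ :=
  ∫ W : unitaryGroup n ℂ, (W : Matrix n n ℂ) * ρ * star (W : Matrix n n ℂ) ∂μ

theorem integrable_conj_unitary [IsFiniteMeasure μ] (ρ : Matrix n n ℂ) :
    Integrable (fun W : unitaryGroup n ℂ => (W : Matrix n n ℂ) * ρ * star (W : Matrix n n ℂ)) μ :=
  (by fun_prop : Continuous _).integrable_of_hasCompactSupport (.of_compactSpace _)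

theorem mul_twirl_mul_star [μ.IsMulLeftInvariant] (ρ : Matrix n n ℂ) (V : unitaryGroup n ℂ) :
    (V : Matrix n n ℂ) * twirl μ ρ * star (V : Matrix n n ℂ) = twirl μ ρ := by
  let e : Matrix n n ℂ ≃L[ℂ] Matrix n n ℂ :=
    (Unitary.conjStarAlgAut ℂ _ V).toAlgEquiv.toLinearEquiv.toContinuousLinearEquiv
  calc (V : Matrix n n ℂ) * twirl μ ρ * star (V : Matrix n n ℂ)
      = ∫ W, e ((W : Matrix n n ℂ) * ρ * star (W : Matrix n n ℂ)) ∂μ :=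
        (e.integral_comp_comm _).symm
    _ = ∫ W, ((V * W : unitaryGroup n ℂ) : Matrix n n ℂ) * ρ *
          star ((V * W : unitaryGroup n ℂ) : Matrix n n ℂ) ∂μ := by
        simp [e, mul_assoc]
    _ = twirl μ ρ :=
        integral_mul_left_eq_self (fun W : unitaryGroup n ℂ =>
          (W : Matrix n n ℂ) * ρ * star (W : Matrix n n ℂ)) V

theorem commute_twirl [μ.IsMulLeftInvariant] (ρ S : Matrix n n ℂ) : Commute S (twirl μ ρ) :=
  commute_of_forall_commute_unitary (fun V hV => by
    have h := congrArg (· * V) (mul_twirl_mul_star μ ρ ⟨V, hV⟩)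
    simpa [mul_assoc, Unitary.star_mul_self_of_mem hV, commute_iff_eq] using h) S

theorem integral_trace_commutator_conj_mul_eq_zero [IsFiniteMeasure μ] [μ.IsMulLeftInvariant]
    (ρ S B : Matrix n n ℂ) :
    ∫ W : unitaryGroup n ℂ, trace (((W : Matrix n n ℂ) * ρ * star (W : Matrix n n ℂ) * S -
      S * ((W : Matrix n n ℂ) * ρ * star (W : Matrix n n ℂ))) * B) ∂μ = 0 := by
  let L : Matrix n n ℂ →L[ℂ] ℂ := LinearMap.toContinuousLinearMap
    (traceLinearMap n ℂ ℂ ∘ₗ LinearMap.mulRight ℂ B ∘ₗ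
      (LinearMap.mulRight ℂ S - LinearMap.mulLeft ℂ S))
  calc _ = ∫ W : unitaryGroup n ℂ, L ((W : Matrix n n ℂ) * ρ * star (W : Matrix n n ℂ)) ∂μ := rfl
    _ = L (twirl μ ρ) := L.integral_comp_comm (integrable_conj_unitary μ ρ)
    _ = 0 := by
      change trace ((twirl μ ρ * S - S * twirl μ ρ) * B) = 0
      rw [(commute_twirl μ ρ S).eq, sub_self, zero_mul, trace_zero]

end Twirl

end Matrix

theorem haar_average_gradient_zero_general
    (d : ℕ)
    [MeasurableSpace (Matrix.unitaryGroup (Fin d) ℂ)]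
    [BorelSpace (Matrix.unitaryGroup (Fin d) ℂ)]
    (μ : Measure (Matrix.unitaryGroup (Fin d) ℂ))
    [μ.IsHaarMeasure]
    (ρ S H : Matrix (Fin d) (Fin d) ℂ) :
    ∫ W : Matrix.unitaryGroup (Fin d) ℂ × Matrix.unitaryGroup (Fin d) ℂ,
        (Complex.I / 2) *
          Matrix.trace
            ((((W.2 : Matrix (Fin d) (Fin d) ℂ) * ρ *
                  star (W.2 : Matrix (Fin d) (Fin d) ℂ)) * S
              - S * ((W.2 : Matrix (Fin d) (Fin d) ℂ) * ρ *
                  star (W.2 : Matrix (Fin d) (Fin d) ℂ))) *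
              (star (W.1 : Matrix (Fin d) (Fin d) ℂ) * H *
                (W.1 : Matrix (Fin d) (Fin d) ℂ)))
        ∂(μ.prod μ)
      = 0 := by
  rw [integral_prod _ ((by fun_prop : Continuous _).integrable_of_hasCompactSupport
    (.of_compactSpace _))]
  simp only [integral_const_mul, integral_trace_commutator_conj_mul_eq_zero, mul_zero,
    integral_zero]

/-- **Vanishing average gradient (Eq. (16)):** with `μ` the Haar probability measure on
`U(d)` (`d ≥ 1`) and arbitrary `d × d` complex matrices `ρ`, `S`, `H`,
`∫∫ (i/2) Tr([W_R ρ W_R*, S] · W_L* H W_L) dμ(W_L) dμ(W_R) = 0`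
with respect to the product measure `μ × μ`. -/
theorem haar_average_gradient_zero
    (d : ℕ) (hd : 1 ≤ d)
    [MeasurableSpace (Matrix.unitaryGroup (Fin d) ℂ)]
    [BorelSpace (Matrix.unitaryGroup (Fin d) ℂ)]
    (μ : Measure (Matrix.unitaryGroup (Fin d) ℂ))
    [μ.IsHaarMeasure] [IsProbabilityMeasure μ]
    (ρ S H : Matrix (Fin d) (Fin d) ℂ) :
    ∫ W : Matrix.unitaryGroup (Fin d) ℂ × Matrix.unitaryGroup (Fin d) ℂ,
        (Complex.I / 2) *
          Matrix.trace
            ((((W.2 : Matrix (Fin d) (Fin d) ℂ) * ρ *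
                  star (W.2 : Matrix (Fin d) (Fin d) ℂ)) * S
              - S * ((W.2 : Matrix (Fin d) (Fin d) ℂ) * ρ *
                  star (W.2 : Matrix (Fin d) (Fin d) ℂ))) *
              (star (W.1 : Matrix (Fin d) (Fin d) ℂ) * H *
                (W.1 : Matrix (Fin d) (Fin d) ℂ)))
        ∂(μ.prod μ)
      = 0 :=
  haar_average_gradient_zero_general d μ ρ S H
end
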